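/- Let d2, a2, h, q > 0 and let 0 ≤ x11 < x12 < L. Suppose w1 is a solution of the upstream toxicant boundary value problem on [x11, L] and w2 is a solution of the upstream toxicant boundary value problem on [x12, L] (with the same parameters d2, a2, h, q). Then w2(x) < w1(x) for every x ∈ [x12, L]. (The solution of the upstream problem is strictly decreasing with respect to the protection-zone endpoint x1.) -/

import Mathlib

open Set Filter Topology

lemma evtl_lt {f : ℝ → ℝ} {x f' : ℝ} (hf : HasDerivAt f f' x) (h : f' < 0) :
    ∀ᶠ y in 𝓝[>] x, f y < f x := by
  have hs := hasDerivAt_iff_tendsto_slope.mp hf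
  have h2 : ∀ᶠ y in 𝓝[≠] x, slope f x y < 0 := hs.eventually_lt_const h
  have h3 : 𝓝[>] x ≤ 𝓝[≠] x := nhdsWithin_mono x (fun y hy => ne_of_gt hy)
  filter_upwards [h3 h2, self_mem_nhdsWithin] with y hy hy'
  rw [slope_def_field] at hy
  have hpos : 0 < y - x := sub_pos.mpr hy'
  have := mul_neg_of_neg_of_pos hy hpos
  rw [div_mul_cancel₀ _ (ne_of_gt hpos)] at this
  linarith

lemma core (d2 a2 q a L : ℝ) (u : ℝ → ℝ) (hd2 : 0 < d2) (ha2 : 0 < a2) (hq : 0 < q)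
    (haL : a < L) (hu : ContDiff ℝ 2 u)
    (heq : ∀ x ∈ Set.Icc a L, d2 * deriv (deriv u) x - a2 * deriv u x - q * u x = 0)
    (hL : deriv u L = 0)
    (hRob : d2 * deriv u a - a2 * u a < 0) :
    ∀ x ∈ Set.Icc a L, 0 < u x := by
  have hu1 : Differentiable ℝ u := hu.differentiable (by norm_num)
  have hu2 : Differentiable ℝ (deriv u) := by
    have h : ContDiff ℝ (1+1) u := by norm_num; exact hu
    exact ((contDiff_succ_iff_deriv.mp h).2.2).differentiable one_ne_zero
  set ψ : ℝ → ℝ := fun x => d2 * deriv u x - a2 * u x with hψdef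
  have hψd : ∀ x, HasDerivAt ψ (d2 * deriv (deriv u) x - a2 * deriv u x) x := fun x =>
    (((hu2 x).hasDerivAt).const_mul d2).sub (((hu1 x).hasDerivAt).const_mul a2)
  have hψcont : Continuous ψ := by
    exact (continuous_const.mul hu2.continuous).sub (continuous_const.mul hu1.continuous)
  have hψeq : ∀ x ∈ Icc a L, HasDerivAt ψ (q * u x) x := by
    intro x hx
    have h1 : d2 * deriv (deriv u) x - a2 * deriv u x = q * u x := by linarith [heq x hx]
    exact h1 ▸ hψd x
  have hψderiv : ∀ x ∈ Icc a L, deriv ψ x = q * u x := fun x hx => (hψeq x hx).deriv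
  have hd2ne : d2 ≠ 0 := ne_of_gt hd2
  have hu'eq : ∀ x, deriv u x = (ψ x + a2 * u x) / d2 := by
    intro x; rw [hψdef]; field_simp; ring
  -- INV: no point in [a,L] with u ≤ 0 and ψ < 0
  have inv : ∀ z ∈ Icc a L, u z ≤ 0 → ψ z < 0 → False := by
    intro z hz huz hψz
    set B : Set ℝ := {x | x ∈ Icc z L ∧ 0 < u x} with hBdef
    have hBsub : ∀ b ∈ B, z ≤ b ∧ b ≤ L := fun b hb => ⟨hb.1.1, hb.1.2⟩
    have key : ∀ s ∈ Icc z L, (∀ y ∈ Icc z s, u y ≤ 0) → ψ s ≤ ψ z ∧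
        AntitoneOn ψ (Icc z s) := by
      intro s hs hus
      have hanti : AntitoneOn ψ (Icc z s) := by
        apply antitoneOn_of_deriv_nonpos (convex_Icc z s) (hψcont.continuousOn)
          (fun x _ => ((hψd x).differentiableAt).differentiableWithinAt)
        intro x hx
        rw [interior_Icc] at hx
        have hx' : x ∈ Icc a L := ⟨le_trans hz.1 (le_of_lt hx.1), le_trans (le_of_lt hx.2) hs.2⟩
        rw [hψderiv x hx']
        exact mul_nonpos_of_nonneg_of_nonpos (le_of_lt hq) (hus x ⟨le_of_lt hx.1, le_of_lt hx.2⟩)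
      exact ⟨hanti (left_mem_Icc.mpr hs.1) (right_mem_Icc.mpr hs.1) hs.1, hanti⟩
    by_cases hB : B.Nonempty
    · -- derive contradiction from first point of B
      have hbdd : BddBelow B := ⟨z, fun b hb => (hBsub b hb).1⟩
      obtain ⟨b0, hb0⟩ := hB
      set c := sInf B with hcdef
      have hzc : z ≤ c := le_csInf ⟨b0, hb0⟩ (fun b hb => (hBsub b hb).1)
      have hcL : c ≤ L := le_trans (csInf_le hbdd hb0) (hBsub b0 hb0).2
      have hclaim1 : ¬ u c < 0 := by
        intro hneg
        have hev : ∀ᶠ x in 𝓝 c, u x < 0 :=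
          (hu1.continuous.continuousAt).eventually_lt_const hneg
        obtain ⟨ε, hε, hball⟩ := Metric.eventually_nhds_iff.mp hev
        have hlow : ∀ b ∈ B, c + ε ≤ b := by
          intro b hb
          have hbc : c ≤ b := csInf_le hbdd hb
          by_contra hcon
          push_neg at hcon
          have : dist b c < ε := by rw [Real.dist_eq, abs_lt]; constructor <;> linarith
          exact absurd hb.2 (not_lt.mpr (le_of_lt (hball this)))
        have : c + ε ≤ c := le_csInf ⟨b0, hb0⟩ hlow
        linarith
      rcases eq_or_lt_of_le hzc with hzc' | hzc'
      · -- c = z : local decrease at z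
        have hder : HasDerivAt u ((ψ z + a2 * u z) / d2) z := (hu'eq z) ▸ (hu1 z).hasDerivAt
        have hderneg : (ψ z + a2 * u z) / d2 < 0 :=
          div_neg_of_neg_of_pos (by nlinarith) hd2
        have hev := evtl_lt hder hderneg
        obtain ⟨s, hsmem, hss⟩ := eventually_iff_exists_mem.mp hev
        obtain ⟨b, hbz, hIoc⟩ := mem_nhdsGT_iff_exists_Ioc_subset.mp hsmem
        have hlow : ∀ x ∈ B, b ≤ x := by
          intro x hx
          by_contra hcon
          push_neg at hcon
          have hxz : z < x := by
            rcases eq_or_lt_of_le (hBsub x hx).1 with h' | h'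
            · exact absurd hx.2 (by rw [← h']; linarith)
            · exact h'
          have : u x < u z := hss x (hIoc ⟨hxz, le_of_lt hcon⟩)
          linarith [hx.2]
        have hbc : b ≤ c := le_csInf ⟨b0, hb0⟩ hlow
        have hzb : z < b := hbz
        linarith [hzc'.le, hzc'.ge]
      · -- z < c
        have husneg : ∀ y ∈ Ico z c, u y ≤ 0 := by
          intro y hy
          by_contra hcon
          push_neg at hcon
          have : y ∈ B := ⟨⟨hy.1, le_trans (le_of_lt hy.2) hcL⟩, hcon⟩
          linarith [csInf_le hbdd this, hy.2]
        have hucle : u c ≤ 0 := by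
          have htend : Tendsto u (𝓝[<] c) (𝓝 (u c)) :=
            (hu1.continuous.continuousAt).mono_left nhdsWithin_le_nhds
          refine le_of_tendsto htend ?_
          filter_upwards [Ioo_mem_nhdsLT_of_mem (⟨hzc', le_rfl⟩ : c ∈ Ioc z c)] with y hy
          exact husneg y ⟨le_of_lt hy.1, hy.2⟩
        have husnegIcc : ∀ y ∈ Icc z c, u y ≤ 0 := by
          intro y hy
          rcases eq_or_lt_of_le hy.2 with h' | h'
          · rw [h']; exact hucle
          · exact husneg y ⟨hy.1, h'⟩
        obtain ⟨hψc, hanti⟩ := key c ⟨hzc, hcL⟩ husnegIcc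
        have hstrict : StrictAntiOn u (Icc z c) := by
          apply strictAntiOn_of_deriv_neg (convex_Icc z c) (hu1.continuous.continuousOn)
          intro x hx
          rw [interior_Icc] at hx
          have hxmem : x ∈ Icc z c := ⟨le_of_lt hx.1, le_of_lt hx.2⟩
          have hψx : ψ x ≤ ψ z := hanti (left_mem_Icc.mpr hzc) hxmem hxmem.1
          have hux : u x ≤ 0 := husneg x ⟨hxmem.1, hx.2⟩
          rw [hu'eq x]
          exact div_neg_of_neg_of_pos (by nlinarith) hd2
        have : u c < u z := hstrict (left_mem_Icc.mpr hzc) (right_mem_Icc.mpr hzc) hzc'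
        exact hclaim1 (by linarith)
    · -- B empty: u ≤ 0 on all [z,L], derive contradiction at L
      have hus : ∀ y ∈ Icc z L, u y ≤ 0 := by
        intro y hy
        by_contra hcon
        push_neg at hcon
        exact hB ⟨y, hy, hcon⟩
      obtain ⟨hψL, -⟩ := key L (right_mem_Icc.mpr hz.2) hus
      have huL : u L ≤ 0 := hus L (right_mem_Icc.mpr hz.2)
      have hψL2 : ψ L = -a2 * u L := by
        show d2 * deriv u L - a2 * u L = -a2 * u L
        rw [hL]; ring
      nlinarith
  -- main argument
  by_contra hcon
  push_neg at hcon
  obtain ⟨x0, hx0, hx0le⟩ := hcon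
  by_cases hua : u a ≤ 0
  · exact inv a (left_mem_Icc.mpr (le_of_lt haL)) hua hRob
  push_neg at hua
  set C : Set ℝ := Icc a L ∩ {x | u x ≤ 0} with hCdef
  have hCclosed : IsClosed C := isClosed_Icc.inter (isClosed_le hu1.continuous continuous_const)
  have hCne : C.Nonempty := ⟨x0, hx0, hx0le⟩
  have hCbdd : BddBelow C := ⟨a, fun x hx => hx.1.1⟩
  set c := sInf C with hcdef
  have hcC : c ∈ C := hCclosed.csInf_mem hCne hCbdd
  have hcIcc : c ∈ Icc a L := hcC.1
  have hucle : u c ≤ 0 := hcC.2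
  have hac : a < c := lt_of_le_of_ne hcIcc.1 (fun h => by rw [← h] at hucle; linarith)
  have hpos : ∀ y ∈ Ico a c, 0 < u y := by
    intro y hy
    by_contra h
    push_neg at h
    have : y ∈ C := ⟨⟨hy.1, le_trans (le_of_lt hy.2) hcIcc.2⟩, h⟩
    linarith [csInf_le hCbdd this, hy.2]
  -- u c = 0
  have hucge : 0 ≤ u c := by
    have htend : Tendsto u (𝓝[<] c) (𝓝 (u c)) :=
      (hu1.continuous.continuousAt).mono_left nhdsWithin_le_nhds
    refine ge_of_tendsto htend ?_
    filter_upwards [Ioo_mem_nhdsLT_of_mem (by constructor <;> [exact hac; exact le_rfl] :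
      c ∈ Ioc a c)] with y hy
    exact le_of_lt (hpos y ⟨le_of_lt hy.1, hy.2⟩)
  have huc0 : u c = 0 := le_antisymm hucle hucge
  -- deriv u c ≤ 0
  have hderle : deriv u c ≤ 0 := by
    have hs := hasDerivAt_iff_tendsto_slope.mp (hu1 c).hasDerivAt
    have hmono : 𝓝[<] c ≤ 𝓝[≠] c := nhdsWithin_mono c (fun y hy => ne_of_lt hy)
    refine le_of_tendsto (hs.mono_left hmono) ?_
    filter_upwards [Ioo_mem_nhdsLT_of_mem (⟨hac, le_rfl⟩ : c ∈ Ioc a c)] with y hy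
    rw [slope_def_field, huc0, sub_zero]
    exact le_of_lt (div_neg_of_pos_of_neg (hpos y ⟨le_of_lt hy.1, hy.2⟩) (by linarith [hy.2]))
  have hψcle : ψ c ≤ 0 := by
    show d2 * deriv u c - a2 * u c ≤ 0
    rw [huc0]; nlinarith
  rcases lt_or_eq_of_le hψcle with hψc | hψc
  · exact inv c hcIcc hucle hψc
  · -- degenerate case: u c = 0, deriv u c = 0; backward uniqueness
    have hderc : deriv u c = 0 := by
      have h : d2 * deriv u c - a2 * u c = 0 := hψc
      rw [huc0] at h
      have h2 : d2 * deriv u c = 0 := by linarith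
      exact (mul_eq_zero.mp h2).resolve_left hd2ne
    -- ODE uniqueness
    set Lm : ℝ × ℝ →L[ℝ] ℝ × ℝ :=
      (ContinuousLinearMap.snd ℝ ℝ ℝ).prod
        ((a2/d2) • ContinuousLinearMap.snd ℝ ℝ ℝ + (q/d2) • ContinuousLinearMap.fst ℝ ℝ ℝ)
      with hLmdef
    have hLm : ∀ p : ℝ × ℝ, Lm p = (p.2, (a2/d2) * p.2 + (q/d2) * p.1) := by
      intro p
      simp [hLmdef, ContinuousLinearMap.prod_apply]
    set f : ℝ → ℝ × ℝ := fun t => (u t, deriv u t) with hfdef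
    have hfc : f c = (0, 0) := by
      show (u c, deriv u c) = (0, 0)
      rw [huc0, hderc]
    have hf' : ∀ t ∈ Ioc a c, HasDerivWithinAt f (Lm (f t)) (Iic t) t := by
      intro t ht
      have ht' : t ∈ Icc a L := ⟨le_of_lt ht.1, le_trans ht.2 hcIcc.2⟩
      have hdd : deriv (deriv u) t = (a2/d2) * deriv u t + (q/d2) * u t := by
        have h0 := heq t ht'
        field_simp
        linarith
      have hda : HasDerivAt f (deriv u t, deriv (deriv u) t) t :=
        HasDerivAt.prodMk ((hu1 t).hasDerivAt) ((hu2 t).hasDerivAt)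
      have hLft : Lm (f t) = (deriv u t, deriv (deriv u) t) := by
        rw [hLm]
        show ((u t, deriv u t).2, a2/d2 * (u t, deriv u t).2 + q/d2 * (u t, deriv u t).1) = _
        simp only []
        rw [hdd]
      rw [hLft]
      exact hda.hasDerivWithinAt
    have hg' : ∀ t ∈ Ioc a c, HasDerivWithinAt (fun _ : ℝ => ((0,0) : ℝ × ℝ))
        (Lm ((0,0) : ℝ × ℝ)) (Iic t) t := by
      intro t ht
      have : Lm ((0,0) : ℝ × ℝ) = 0 := by rw [hLm]; simp
      rw [this]
      exact hasDerivWithinAt_const t _ _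
    have huniq := ODE_solution_unique_of_mem_Icc_left
      (v := fun _ p => Lm p) (s := fun _ => (univ : Set (ℝ × ℝ)))
      (K := ‖Lm‖₊)
      (fun _ _ => Lm.lipschitz.lipschitzOnWith)
      ((hu1.continuous.prodMk hu2.continuous).continuousOn)
      hf' (fun _ _ => mem_univ _)
      (continuousOn_const)
      hg' (fun _ _ => mem_univ _)
      (by show (u c, deriv u c) = (0,0); rw [huc0, hderc])
    have heqa := huniq (left_mem_Icc.mpr (le_of_lt hac))
    have hua0 : u a = 0 := congrArg Prod.fst heqa
    linarith

/-- `w` is a solution of the upstream toxicant boundary value problem with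
parameters `d2, a2, h, q` on the interval `[x1, L]`. -/
def IsUpstreamSolution (d2 a2 h q x1 L : ℝ) (w : ℝ → ℝ) : Prop :=
  ContDiff ℝ 2 w ∧
  (∀ x ∈ Set.Icc x1 L,
      d2 * deriv (deriv w) x - a2 * deriv w x + h - q * w x = 0) ∧
  d2 * deriv w x1 - a2 * w x1 = 0 ∧ deriv w L = 0

/-- the solution of the upstream problem is strictly decreasing
with respect to the protection-zone endpoint `x1`. -/
theorem upstream_antitone_in_x1
    (d2 a2 h q x11 x12 L : ℝ) (w1 w2 : ℝ → ℝ)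
    (hd2 : 0 < d2) (ha2 : 0 < a2) (hh : 0 < h) (hq : 0 < q)
    (hx11 : 0 ≤ x11) (hx1112 : x11 < x12) (hx12L : x12 < L)
    (hw1 : IsUpstreamSolution d2 a2 h q x11 L w1)
    (hw2 : IsUpstreamSolution d2 a2 h q x12 L w2) :
    ∀ x ∈ Set.Icc x12 L, w2 x < w1 x := by
  obtain ⟨hw1C, hw1eq, hw1rob, hw1L⟩ := hw1
  obtain ⟨hw2C, hw2eq, hw2rob, hw2L⟩ := hw2
  have hqne : q ≠ 0 := ne_of_gt hq
  have hw1d1 : Differentiable ℝ w1 := hw1C.differentiable (by norm_num)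
  have hw1d2 : Differentiable ℝ (deriv w1) := by
    have h2 : ContDiff ℝ (1+1) w1 := by norm_num; exact hw1C
    exact ((contDiff_succ_iff_deriv.mp h2).2.2).differentiable one_ne_zero
  have hw2d1 : Differentiable ℝ w2 := hw2C.differentiable (by norm_num)
  have hw2d2 : Differentiable ℝ (deriv w2) := by
    have h2 : ContDiff ℝ (1+1) w2 := by norm_num; exact hw2C
    exact ((contDiff_succ_iff_deriv.mp h2).2.2).differentiable one_ne_zero
  have hqh : q * (h / q) = h := by field_simp
  have hx11L : x11 < L := lt_trans hx1112 hx12L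
  -- Step 1: w1 < h/q on [x11, L]
  have e1 : ∀ x, deriv (fun y => h / q - w1 y) x = -deriv w1 x := fun x => deriv_const_sub _
  have e1f : deriv (fun y => h / q - w1 y) = fun x => -deriv w1 x := funext e1
  have e2 : ∀ x, deriv (deriv (fun y => h / q - w1 y)) x = -deriv (deriv w1) x := by
    intro x; rw [e1f]; exact deriv.neg
  have hEQ1 : ∀ x ∈ Set.Icc x11 L,
      d2 * deriv (deriv (fun y => h / q - w1 y)) x
        - a2 * deriv (fun y => h / q - w1 y) x - q * (h / q - w1 x) = 0 := by
    intro x hx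
    rw [e2, e1]
    linear_combination (-1 : ℝ) * hw1eq x hx - hqh
  have hLL1 : deriv (fun y => h / q - w1 y) L = 0 := by rw [e1, hw1L, neg_zero]
  have hROB1 : d2 * deriv (fun y => h / q - w1 y) x11 - a2 * (h / q - w1 x11) < 0 := by
    rw [e1]
    have hsub : a2 * (h / q - w1 x11) = a2 * (h / q) - a2 * w1 x11 := mul_sub _ _ _
    have hpos : 0 < a2 * (h / q) := mul_pos ha2 (div_pos hh hq)
    have hrob := hw1rob
    nlinarith
  have step1 : ∀ x ∈ Set.Icc x11 L, 0 < h / q - w1 x :=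
    core d2 a2 q x11 L (fun y => h / q - w1 y) hd2 ha2 hq hx11L
      (contDiff_const.sub hw1C) hEQ1 hLL1 hROB1
  -- Step 2: the Robin quantity of w1 is strictly negative at x12
  have hφd : ∀ x, HasDerivAt (fun y => d2 * deriv w1 y - a2 * w1 y)
      (d2 * deriv (deriv w1) x - a2 * deriv w1 x) x := fun x =>
    (((hw1d2 x).hasDerivAt).const_mul d2).sub (((hw1d1 x).hasDerivAt).const_mul a2)
  have hφcont : Continuous (fun y => d2 * deriv w1 y - a2 * w1 y) :=
    (continuous_const.mul hw1d2.continuous).sub (continuous_const.mul hw1d1.continuous)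
  have hφanti : StrictAntiOn (fun y => d2 * deriv w1 y - a2 * w1 y) (Set.Icc x11 x12) := by
    apply strictAntiOn_of_deriv_neg (convex_Icc x11 x12) hφcont.continuousOn
    intro x hx
    rw [interior_Icc] at hx
    have hxL : x ∈ Set.Icc x11 L := ⟨le_of_lt hx.1, le_trans (le_of_lt hx.2) (le_of_lt hx12L)⟩
    rw [(hφd x).deriv]
    have h1 := hw1eq x hxL
    have h2 := step1 x hxL
    have h3 : q * w1 x < q * (h / q) := by
      apply mul_lt_mul_of_pos_left _ hq
      linarith
    rw [hqh] at h3
    linarith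
  have hφ12 : d2 * deriv w1 x12 - a2 * w1 x12 < 0 := by
    have := hφanti (Set.left_mem_Icc.mpr (le_of_lt hx1112))
      (Set.right_mem_Icc.mpr (le_of_lt hx1112)) hx1112
    simp only [] at this
    linarith [hw1rob]
  -- Step 3: apply core to v = w1 - w2 on [x12, L]
  have f1 : ∀ x, deriv (fun y => w1 y - w2 y) x = deriv w1 x - deriv w2 x := fun x =>
    deriv_sub (hw1d1 x) (hw2d1 x)
  have f1f : deriv (fun y => w1 y - w2 y) = fun x => deriv w1 x - deriv w2 x := funext f1
  have f2 : ∀ x, deriv (deriv (fun y => w1 y - w2 y)) x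
      = deriv (deriv w1) x - deriv (deriv w2) x := by
    intro x; rw [f1f]; exact deriv_sub (hw1d2 x) (hw2d2 x)
  have hEQ3 : ∀ x ∈ Set.Icc x12 L,
      d2 * deriv (deriv (fun y => w1 y - w2 y)) x
        - a2 * deriv (fun y => w1 y - w2 y) x - q * (w1 x - w2 x) = 0 := by
    intro x hx
    have hxL : x ∈ Set.Icc x11 L := ⟨le_trans (le_of_lt hx1112) hx.1, hx.2⟩
    rw [f2, f1]
    linear_combination hw1eq x hxL - hw2eq x hx
  have hLL3 : deriv (fun y => w1 y - w2 y) L = 0 := by rw [f1, hw1L, hw2L, sub_zero]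
  have hROB3 : d2 * deriv (fun y => w1 y - w2 y) x12 - a2 * (w1 x12 - w2 x12) < 0 := by
    rw [f1]
    nlinarith [hw2rob, hφ12]
  have step3 : ∀ x ∈ Set.Icc x12 L, 0 < w1 x - w2 x :=
    core d2 a2 q x12 L (fun y => w1 y - w2 y) hd2 ha2 hq hx12L
      (hw1C.sub hw2C) hEQ3 hLL3 hROB3
  intro x hx
  linarith [step3 x hx]
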